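/- arXiv:2401.05661 — 7 statements merged into one kernel-verified Lean document; each statement's English description precedes it below -/
import Mathlib

section
/- Let c₁ ≠ c₂ in ℝᵈ, and suppose π_q(c₂ − c₁) = 0. If S = sphere(c₁, r₁) ∩ sphere(c₂, r₂) is nonempty and not a single point, then the maximum of the q-th coordinate over S equals π_q(c) + r, where c and r are the center and radius of S as a (d−2)-sphere: c = c₁ + t(c₂−c₁) with t = 1/2 + (r₁²−r₂²)/(2‖c₂−c₁‖²) and r² = r₁² − t²‖c₂−c₁‖² > 0. Moreover this maximum is attained at c + r·e_q. -/
open Metric EuclideanSpace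
open scoped RealInnerProductSpace

/-- If the normal `c₂ - c₁` of the hyperplane containing `S = ∂D₁ ∩ ∂D₂` is orthogonal
to `e_q`, then the maximum of the `q`-th coordinate over `S` is `c q + r`, attained at
`c + r • e_q`, where `c` and `r` are the center and radius of the `(d-2)`-sphere `S`. -/
theorem stmt_6 {d : ℕ} (hd : 2 ≤ d) (c₁ c₂ : EuclideanSpace ℝ (Fin d)) (hne : c₁ ≠ c₂)
    (r₁ r₂ : ℝ) (q : Fin d) (hq : (c₂ - c₁) q = 0)
    (hS : (sphere c₁ r₁ ∩ sphere c₂ r₂).Nonempty)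
    (hnot : ¬ ∃ x, sphere c₁ r₁ ∩ sphere c₂ r₂ = {x})
    (t : ℝ) (ht : t = 1 / 2 + (r₁ ^ 2 - r₂ ^ 2) / (2 * ‖c₂ - c₁‖ ^ 2))
    (c : EuclideanSpace ℝ (Fin d)) (hc : c = c₁ + t • (c₂ - c₁))
    (r : ℝ) (hr : r = Real.sqrt (r₁ ^ 2 - t ^ 2 * ‖c₂ - c₁‖ ^ 2)) :
    0 < r₁ ^ 2 - t ^ 2 * ‖c₂ - c₁‖ ^ 2 ∧
    IsGreatest ((fun x => x q) '' (sphere c₁ r₁ ∩ sphere c₂ r₂)) (c q + r) ∧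
    c + r • EuclideanSpace.single q (1 : ℝ) ∈ sphere c₁ r₁ ∩ sphere c₂ r₂ := by
  set n := c₂ - c₁ with hn
  have hnne : n ≠ 0 := sub_ne_zero.mpr (Ne.symm hne)
  have hN : (0:ℝ) < ‖n‖ ^ 2 := pow_pos (norm_pos_iff.mpr hnne) 2
  obtain ⟨x₀, hx₀⟩ := hS
  have hr₁ : 0 ≤ r₁ := by
    have := hx₀.1; rw [mem_sphere] at this; rw [← this]; exact dist_nonneg
  have hr₂ : 0 ≤ r₂ := by
    have := hx₀.2; rw [mem_sphere] at this; rw [← this]; exact dist_nonneg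
  have htN : (2 * t - 1) * ‖n‖ ^ 2 = r₁ ^ 2 - r₂ ^ 2 := by
    rw [ht]; field_simp; ring
  -- characterization of the intersection
  have key : ∀ x : EuclideanSpace ℝ (Fin d),
      x ∈ sphere c₁ r₁ ∩ sphere c₂ r₂ ↔
      ‖x - c‖ ^ 2 = r₁ ^ 2 - t ^ 2 * ‖n‖ ^ 2 ∧ ⟪x - c, n⟫ = 0 := by
    intro x
    have e1 : x - c₁ = (x - c) + t • n := by rw [hc]; abel
    have e2 : x - c₂ = (x - c) + (t - 1) • n := by
      rw [hc, hn]; rw [sub_smul, one_smul]; abel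
    have h1 : ‖x - c₁‖ ^ 2 = ‖x - c‖ ^ 2 + 2 * t * ⟪x - c, n⟫ + t ^ 2 * ‖n‖ ^ 2 := by
      rw [e1, norm_add_sq_real, real_inner_smul_right, norm_smul]
      simp [mul_pow]; ring
    have h2 : ‖x - c₂‖ ^ 2 = ‖x - c‖ ^ 2 + 2 * (t - 1) * ⟪x - c, n⟫ + (t - 1) ^ 2 * ‖n‖ ^ 2 := by
      rw [e2, norm_add_sq_real, real_inner_smul_right, norm_smul]
      simp [mul_pow]; ring
    have m1 : x ∈ sphere c₁ r₁ ↔ ‖x - c₁‖ ^ 2 = r₁ ^ 2 := by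
      rw [mem_sphere, dist_eq_norm, ← sq_eq_sq₀ (norm_nonneg _) hr₁]
    have m2 : x ∈ sphere c₂ r₂ ↔ ‖x - c₂‖ ^ 2 = r₂ ^ 2 := by
      rw [mem_sphere, dist_eq_norm, ← sq_eq_sq₀ (norm_nonneg _) hr₂]
    constructor
    · rintro ⟨hs1, hs2⟩
      rw [m1, h1] at hs1; rw [m2, h2] at hs2
      have hA : ⟪x - c, n⟫ = 0 := by linear_combination (hs1 - hs2 - htN) / 2
      refine ⟨by linear_combination hs1 - 2 * t * hA, hA⟩
    · rintro ⟨hB, hA⟩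
      exact ⟨m1.mpr (by rw [h1, hA, hB]; ring), m2.mpr (by rw [h2, hA, hB]; linear_combination -htN)⟩
  -- positivity of the squared radius
  have hB0 : 0 ≤ r₁ ^ 2 - t ^ 2 * ‖n‖ ^ 2 := by
    have := (key x₀).mp hx₀
    rw [← this.1]; positivity
  have hpos : 0 < r₁ ^ 2 - t ^ 2 * ‖n‖ ^ 2 := by
    rcases hB0.lt_or_eq with h | h
    · exact h
    · exfalso
      apply hnot
      refine ⟨c, Set.eq_singleton_iff_unique_mem.mpr ⟨?_, ?_⟩⟩
      · exact (key c).mpr ⟨by simp [← h], by simp⟩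
      · intro x hx
        have := (key x).mp hx
        have hxc : ‖x - c‖ ^ 2 = 0 := by rw [this.1, ← h]
        have : x - c = 0 := by
          rwa [pow_eq_zero_iff (by norm_num), norm_eq_zero] at hxc
        exact sub_eq_zero.mp this
  have hrpos : 0 < r := hr ▸ Real.sqrt_pos.mpr hpos
  have hr2 : r ^ 2 = r₁ ^ 2 - t ^ 2 * ‖n‖ ^ 2 := by rw [hr, Real.sq_sqrt hB0]
  -- the attaining point
  have hnq : n q = 0 := hq
  have hmem : c + r • EuclideanSpace.single q (1 : ℝ) ∈ sphere c₁ r₁ ∩ sphere c₂ r₂ := by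
    apply (key _).mpr
    constructor
    · rw [add_sub_cancel_left, norm_smul]
      simp [abs_of_pos hrpos, hr2]
    · rw [add_sub_cancel_left, real_inner_smul_left, EuclideanSpace.inner_single_left]
      simp [hnq]
  refine ⟨hpos, ⟨⟨c + r • EuclideanSpace.single q (1 : ℝ), hmem, ?_⟩, ?_⟩, hmem⟩
  · simp [EuclideanSpace.single_apply]
  · rintro y ⟨x, hx, rfl⟩
    have hk := (key x).mp hx
    have hnorm : ‖x - c‖ = r := by
      have : ‖x - c‖ ^ 2 = r ^ 2 := by rw [hk.1, hr2]
      exact (sq_eq_sq₀ (norm_nonneg _) hrpos.le).mp this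
    have hcoord : (x - c) q ≤ ‖x - c‖ := by
      have := real_inner_le_norm (x - c) (EuclideanSpace.single q (1 : ℝ))
      rw [real_inner_comm, EuclideanSpace.inner_single_left] at this
      simpa using this
    have hsub : (x - c) q = x q - c q := by simp
    simp only []
    rw [hsub, hnorm] at hcoord
    linarith
end

section
/- Let M = {closedBall(cᵢ, rᵢ)}ᵢ₌₁ᵐ be a finite collection of closed balls in ℝᵈ such that every pair of balls intersects: ‖cᵢ − cⱼ‖ ≤ rᵢ + rⱼ for all i, j. Then ⋂ᵢ closedBall(cᵢ, √(2d/(d+1))·rᵢ) ≠ ∅. -/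
/-!
Let `t` be the least factor such that the balls `closedBall (c i) (t * r i)` share a point, and
`x` such a point. Then `x` lies in the convex hull of the centres of the balls whose boundary
passes through `x`: otherwise some direction strictly decreases every tight ratio
`‖x - c i‖ / r i`. By Carathéodory, `x = ∑ wᵢ zᵢ` with positive weights on `n ≤ d + 1` affinely
independent such centres `zᵢ`, of radii `Rᵢ`. The identity
`∑ᵢⱼ wᵢ wⱼ ‖zᵢ - zⱼ‖² = 2 ∑ᵢ wᵢ ‖zᵢ - x‖² = 2 t² ∑ᵢ wᵢ Rᵢ²`, the bound `‖zᵢ - zⱼ‖ ≤ Rᵢ + Rⱼ` off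
the diagonal, and two Cauchy–Schwarz estimates on the weights give
`t² ≤ 2 - 2 / n ≤ 2d / (d + 1)`.
-/

open Metric EuclideanSpace Finset Filter Topology
open scoped RealInnerProductSpace

section WeightedSums

variable {ι : Type*}

theorem sum_sum_mul_add_sq (s : Finset ι) (w R : ι → ℝ) :
    ∑ i ∈ s, ∑ j ∈ s, w i * w j * (R i + R j) ^ 2
      = 2 * (∑ i ∈ s, w i) * ∑ i ∈ s, w i * R i ^ 2 + 2 * (∑ i ∈ s, w i * R i) ^ 2 := by
  have hexpand : ∀ i, ∑ j ∈ s, w i * w j * (R i + R j) ^ 2 = w i * R i ^ 2 * ∑ j ∈ s, w j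
      + 2 * (w i * R i) * ∑ j ∈ s, w j * R j + w i * ∑ j ∈ s, w j * R j ^ 2 := fun i => by
    simp only [mul_sum, ← sum_add_distrib]
    exact sum_congr rfl fun j _ => by ring
  simp only [hexpand, sum_add_distrib, ← sum_mul, ← mul_sum]
  ring

theorem sq_sum_sub_two_mul_sum_sq_le [Fintype ι] {w : ι → ℝ} (R : ι → ℝ)
    (hw : ∀ i, 0 < w i) (hw1 : ∑ i, w i = 1) :
    (∑ i, w i * R i) ^ 2 - 2 * ∑ i, (w i * R i) ^ 2
      ≤ (1 - 2 / Fintype.card ι) * ∑ i, w i * R i ^ 2 := by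
  rcases Nat.lt_or_ge 1 (Fintype.card ι) with hn | hn
  · have hcs : (∑ i, w i * R i) ^ 2 ≤ Fintype.card ι * ∑ i, (w i * R i) ^ 2 :=
      sq_sum_le_card_mul_sum_sq
    have hjensen : (∑ i, w i * R i) ^ 2 ≤ ∑ i, w i * R i ^ 2 := by
      simpa [hw1] using sum_sq_le_sum_mul_sum_of_sq_le_mul univ (r := fun i => w i * R i)
        (fun i _ => (hw i).le) (fun i _ => mul_nonneg (hw i).le (sq_nonneg (R i)))
        (fun i _ => le_of_eq (by ring))
    have hn' : (2 : ℝ) ≤ Fintype.card ι := by exact_mod_cast hn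
    calc (∑ i, w i * R i) ^ 2 - 2 * ∑ i, (w i * R i) ^ 2
        ≤ (1 - 2 / Fintype.card ι) * (∑ i, w i * R i) ^ 2 := by
          rw [sub_mul, one_mul, div_mul_eq_mul_div, mul_div_assoc]
          have := (div_le_iff₀' (by linarith)).2 hcs
          linarith
      _ ≤ (1 - 2 / Fintype.card ι) * ∑ i, w i * R i ^ 2 := by
          gcongr
          rw [sub_nonneg, div_le_one (by linarith)]
          exact hn'
  · have : Nonempty ι := univ_nonempty_iff.1 (nonempty_of_sum_ne_zero (hw1 ▸ one_ne_zero))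
    have hcard : Fintype.card ι = 1 := le_antisymm hn Fintype.card_pos
    obtain ⟨_⟩ := Fintype.card_eq_one_iff_nonempty_unique.1 hcard
    simp only [Fintype.sum_unique] at hw1 ⊢
    rw [hw1, hcard]
    linarith

end WeightedSums

section InnerProductSpace

variable {E : Type*} [NormedAddCommGroup E] [InnerProductSpace ℝ E]

theorem exists_forall_inner_pos_of_notMem_convexHull [CompleteSpace E] {s : Set E}
    (hs : s.Finite) {x : E} (hx : x ∉ convexHull ℝ s) :
    ∃ v : E, ∀ y ∈ s, 0 < ⟪y - x, v⟫ := by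
  obtain ⟨f, u, hfx, hf⟩ := geometric_hahn_banach_point_closed (convex_convexHull ℝ s)
    (hs.isCompact_convexHull (𝕜 := ℝ)).isClosed hx
  refine ⟨(InnerProductSpace.toDual ℝ E).symm f, fun y hy => ?_⟩
  rw [real_inner_comm, inner_sub_right, InnerProductSpace.toDual_symm_apply,
    InnerProductSpace.toDual_symm_apply]
  linarith [hf y (subset_convexHull ℝ s hy)]

theorem eventually_norm_add_smul_lt {a v : E} (h : ⟪a, v⟫ < 0) :
    ∀ᶠ s in 𝓝[>] (0 : ℝ), ‖a + s • v‖ < ‖a‖ := by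
  have hlim : Tendsto (fun s : ℝ => 2 * ⟪a, v⟫ + s * ‖v‖ ^ 2) (𝓝 0) (𝓝 (2 * ⟪a, v⟫)) :=
    (continuous_const.add (continuous_id.mul continuous_const)).tendsto' 0 _ (by simp)
  filter_upwards [self_mem_nhdsWithin,
    nhdsWithin_le_nhds (hlim.eventually_lt_const (by linarith))] with s (hs : 0 < s) hneg
  rw [← sq_lt_sq₀ (norm_nonneg _) (norm_nonneg _), norm_add_sq_real, real_inner_smul_right,
    norm_smul, mul_pow, Real.norm_eq_abs, sq_abs]
  nlinarith

theorem sum_sum_mul_norm_sub_sq {ι : Type*} (s : Finset ι) (w : ι → ℝ) (u : ι → E) :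
    ∑ i ∈ s, ∑ j ∈ s, w i * w j * ‖u i - u j‖ ^ 2
      = 2 * (∑ i ∈ s, w i) * ∑ i ∈ s, w i * ‖u i‖ ^ 2 - 2 * ‖∑ i ∈ s, w i • u i‖ ^ 2 := by
  have hinner : ‖∑ i ∈ s, w i • u i‖ ^ 2 = ∑ i ∈ s, ∑ j ∈ s, w i * w j * ⟪u i, u j⟫ := by
    simp only [← real_inner_self_eq_norm_sq, sum_inner, inner_sum, real_inner_smul_left,
      real_inner_smul_right]
    exact sum_congr rfl fun i _ => sum_congr rfl fun j _ => by rw [real_inner_comm]; ring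
  have hleft : ∀ i, ∑ j ∈ s, w i * w j * ‖u i‖ ^ 2 = w i * ‖u i‖ ^ 2 * ∑ j ∈ s, w j :=
    fun i => by rw [mul_sum]; exact sum_congr rfl fun j _ => by ring
  have hright : ∀ i, ∑ j ∈ s, w i * w j * ‖u j‖ ^ 2 = w i * ∑ j ∈ s, w j * ‖u j‖ ^ 2 :=
    fun i => by rw [mul_sum]; exact sum_congr rfl fun j _ => by ring
  have hcross : ∀ i,
      ∑ j ∈ s, w i * w j * (2 * ⟪u i, u j⟫) = 2 * ∑ j ∈ s, w i * w j * ⟪u i, u j⟫ :=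
    fun i => by rw [mul_sum]; exact sum_congr rfl fun j _ => by ring
  simp only [hinner, norm_sub_sq_real, mul_sub, mul_add, sum_sub_distrib, sum_add_distrib,
    hleft, hright, hcross, ← sum_mul, ← mul_sum]
  ring

theorem sq_le_two_sub_two_div_of_card_le {ι : Type*} [Fintype ι] {z : ι → E} {x : E}
    {w R : ι → ℝ} {t : ℝ} (hw : ∀ i, 0 < w i) (hw1 : ∑ i, w i = 1) (hx : ∑ i, w i • z i = x)
    (hR : ∀ i, 0 < R i) (hz : Pairwise fun i j => ‖z i - z j‖ ≤ R i + R j)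
    (ht : ∀ i, ‖z i - x‖ = t * R i) {n : ℕ} (hn : Fintype.card ι ≤ n) :
    t ^ 2 ≤ 2 - 2 / n := by
  classical
  have hne : (univ : Finset ι).Nonempty := nonempty_of_sum_ne_zero (hw1 ▸ one_ne_zero)
  have hS : 0 < ∑ i, w i * R i ^ 2 := sum_pos (fun i _ => mul_pos (hw i) (pow_pos (hR i) 2)) hne
  have hcentred : ∑ i, w i • (z i - x) = 0 := by
    simp only [smul_sub, sum_sub_distrib, hx, ← sum_smul, hw1, one_smul, sub_self]
  have hspread : ∑ i, ∑ j, w i * w j * ‖z i - z j‖ ^ 2 = 2 * t ^ 2 * ∑ i, w i * R i ^ 2 := by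
    have := sum_sum_mul_norm_sub_sq univ w (fun i => z i - x)
    simp only [sub_sub_sub_cancel_right, hcentred, norm_zero, hw1, ht] at this
    rw [this, zero_pow two_ne_zero, mul_zero, sub_zero, mul_sum, mul_sum]
    exact sum_congr rfl fun i _ => by ring
  have hoverlap : ∑ i, ∑ j, w i * w j * ‖z i - z j‖ ^ 2
      ≤ ∑ i, ∑ j, w i * w j * ((R i + R j) ^ 2 - if i = j then (2 * R i) ^ 2 else 0) := by
    refine sum_le_sum fun i _ => sum_le_sum fun j _ =>
      mul_le_mul_of_nonneg_left ?_ (mul_nonneg (hw i).le (hw j).le)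
    split_ifs with hij
    · simp [hij, two_mul]
    · simpa using pow_le_pow_left₀ (norm_nonneg _) (hz hij) 2
  have hdiag : ∑ i, ∑ j, w i * w j * (if i = j then (2 * R i) ^ 2 else 0)
      = 4 * ∑ i, (w i * R i) ^ 2 := by
    simp only [mul_ite, mul_zero, sum_ite_eq, mem_univ, if_true, mul_sum]
    exact sum_congr rfl fun i _ => by ring
  simp only [mul_sub, sum_sub_distrib, hdiag, sum_sum_mul_add_sq, hw1, hspread] at hoverlap
  have hweights := sq_sum_sub_two_mul_sum_sq_le R hw hw1
  have hcard : 2 / (n : ℝ) ≤ 2 / Fintype.card ι := by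
    gcongr
    exact_mod_cast Fintype.card_pos_iff.2 (univ_nonempty_iff.1 hne)
  refine le_of_mul_le_mul_right ?_ hS
  linarith [mul_le_mul_of_nonneg_right hcard hS.le]

end InnerProductSpace

section MaxScaledDist

variable {ι E : Type*} [Fintype ι] [Nonempty ι] [NormedAddCommGroup E]

noncomputable def maxScaledDist (c : ι → E) (r : ι → ℝ) (x : E) : ℝ :=
  univ.sup' univ_nonempty fun i => ‖x - c i‖ / r i

variable {c : ι → E} {r : ι → ℝ}

theorem norm_sub_le_maxScaledDist_mul (x : E) {i : ι} (hr : 0 < r i) :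
    ‖x - c i‖ ≤ maxScaledDist c r x * r i :=
  (div_le_iff₀ hr).1 (le_sup' (fun i => ‖x - c i‖ / r i) (mem_univ i))

theorem maxScaledDist_lt_iff (hr : ∀ i, 0 < r i) {x : E} {t : ℝ} :
    maxScaledDist c r x < t ↔ ∀ i, ‖x - c i‖ < t * r i := by
  simp only [maxScaledDist, sup'_lt_iff, mem_univ, true_implies, div_lt_iff₀ (hr _)]

theorem continuous_maxScaledDist (c : ι → E) (r : ι → ℝ) : Continuous (maxScaledDist c r) :=
  Continuous.finset_sup'_apply _ fun _ _ => (continuous_id.sub continuous_const).norm.div_const _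

theorem tendsto_maxScaledDist_cocompact [ProperSpace E] (hr : ∀ i, 0 < r i) :
    Tendsto (maxScaledDist c r) (cocompact E) atTop := by
  obtain ⟨i⟩ := ‹Nonempty ι›
  have hnorm : Tendsto (fun x : E => ‖x - c i‖ / r i) (cocompact E) atTop :=
    (tendsto_atTop_mono (fun x => norm_sub_norm_le x (c i))
      (tendsto_atTop_add_const_right _ _ tendsto_norm_cocompact_atTop)).atTop_div_const (hr i)
  exact tendsto_atTop_mono (fun x => le_sup' (fun i => ‖x - c i‖ / r i) (mem_univ i)) hnorm

theorem mem_convexHull_of_forall_maxScaledDist_le [InnerProductSpace ℝ E] [CompleteSpace E]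
    (hr : ∀ i, 0 < r i) {x : E} (hmin : ∀ y, maxScaledDist c r x ≤ maxScaledDist c r y) :
    x ∈ convexHull ℝ (c '' {i | ‖x - c i‖ = maxScaledDist c r x * r i}) := by
  set t := maxScaledDist c r x
  by_contra hx
  obtain ⟨v, hv⟩ := exists_forall_inner_pos_of_notMem_convexHull (Set.toFinite _) hx
  have hdescent : ∀ i, ∀ᶠ s in 𝓝[>] (0 : ℝ), ‖x + s • v - c i‖ < t * r i := by
    intro i
    rcases (norm_sub_le_maxScaledDist_mul x (hr i)).eq_or_lt with htight | hslack
    · have hinner : ⟪x - c i, v⟫ < 0 := by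
        rw [← neg_sub, inner_neg_left, neg_lt_zero]
        exact hv (c i) ⟨i, htight, rfl⟩
      filter_upwards [eventually_norm_add_smul_lt hinner] with s hs
      rwa [add_sub_right_comm, ← htight]
    · have hcont : ContinuousAt (fun s : ℝ => ‖x + s • v - c i‖) 0 := by fun_prop
      exact nhdsWithin_le_nhds (hcont.eventually_lt continuousAt_const (by simpa using hslack))
  obtain ⟨s, hs⟩ := (eventually_all.2 hdescent).exists
  exact (hmin (x + s • v)).not_gt ((maxScaledDist_lt_iff hr).2 hs)

end MaxScaledDist

/-- Generalized Vietoris–Rips lemma: if every pair of closed balls in the family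
intersects, then rescaling all radii by the Jung constant `√(2d/(d+1))` yields a
family with a common point. -/
theorem stmt_10 {d m : ℕ} (c : Fin m → EuclideanSpace ℝ (Fin d)) (r : Fin m → ℝ)
    (hr : ∀ i, 0 < r i)
    (h : ∀ i j, ‖c i - c j‖ ≤ r i + r j) :
    (⋂ i, closedBall (c i) (Real.sqrt (2 * d / (d + 1)) * r i)).Nonempty := by
  rcases isEmpty_or_nonempty (Fin m) with _ | _
  · simp
  obtain ⟨x, hmin⟩ :=
    (continuous_maxScaledDist c r).exists_forall_le (tendsto_maxScaledDist_cocompact hr)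
  obtain ⟨ι, _, z, w, hz, haff, hw, hw1, hx⟩ :=
    eq_pos_convex_span_of_mem_convexHull (mem_convexHull_of_forall_maxScaledDist_le hr hmin)
  choose j hj_tight hj using fun k => hz (Set.mem_range_self k)
  have hcard : Fintype.card ι ≤ d + 1 := by
    simpa using haff.card_le_finrank_succ.trans (Nat.add_le_add_right (Submodule.finrank_le _) 1)
  have ht : maxScaledDist c r x ^ 2 ≤ 2 * d / (d + 1) := by
    have := sq_le_two_sub_two_div_of_card_le hw hw1 hx (fun k => hr (j k))
      (fun k l _ => by simpa only [hj] using h (j k) (j l))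
      (fun k => by rw [← hj k, norm_sub_rev]; exact hj_tight k) hcard
    convert this using 1
    field_simp
    push_cast
    ring
  refine ⟨x, Set.mem_iInter.2 fun i => ?_⟩
  rw [mem_closedBall, dist_eq_norm]
  calc ‖x - c i‖ ≤ maxScaledDist c r x * r i := norm_sub_le_maxScaledDist_mul x (hr i)
    _ ≤ _ := mul_le_mul_of_nonneg_right ((le_abs_self _).trans (Real.abs_le_sqrt ht)) (hr i).le
end

section
/- Let M be a finite collection of closed balls in ℝᵈ with positive radii, ν_M its Vietoris–Rips scale and μ_M its Čech scale. Then ν_M ≤ μ_M ≤ √(2d/(d+1))·ν_M. -/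
/-!
A common point of the balls is a point of every pairwise intersection, so `ν ≤ μ`.

For the upper bound, pairwise intersecting balls `B(c i, s i)` satisfy
`dist (c i) (c j) ≤ s i + s j`. Let `x` minimise `t = max_i dist x (c i) / s i`. Then `x` lies in
the convex hull of the active centres (those with `dist x (c i) = t * s i`), so by Carathéodory
`x = ∑ w_k z_k` for `k ≤ d + 1` affinely independent active centres `z_k`. Expanding
`∑_{k,l} w_k w_l ‖z_k - z_l‖²` once through the barycentre (giving `2 t² ∑ w_k σ_k²`) and once
through `‖z_k - z_l‖ ≤ σ_k + σ_l` off the diagonal, two Cauchy–Schwarz estimates give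
`t² ≤ 2 - 2 / k ≤ 2d / (d + 1)`.
-/

open Metric EuclideanSpace

open Filter Topology

open scoped RealInnerProductSpace

section InnerProductSpace

variable {ι E : Type*} [NormedAddCommGroup E] [InnerProductSpace ℝ E]

theorem sum_sum_mul_mul_norm_sub_sq (s : Finset ι) (w : ι → ℝ) (v : ι → E) :
    ∑ i ∈ s, ∑ j ∈ s, w i * w j * ‖v i - v j‖ ^ 2 =
      2 * (∑ i ∈ s, w i) * ∑ i ∈ s, w i * ‖v i‖ ^ 2 - 2 * ‖∑ i ∈ s, w i • v i‖ ^ 2 := by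
  have hterm : ∀ i j, w i * w j * ‖v i - v j‖ ^ 2 =
      w i * ‖v i‖ ^ 2 * w j + w i * (w j * ‖v j‖ ^ 2) - 2 * ⟪w i • v i, w j • v j⟫ := by
    intro i j
    rw [norm_sub_sq_real, real_inner_smul_left, real_inner_smul_right]
    ring
  simp only [hterm, Finset.sum_sub_distrib, Finset.sum_add_distrib, ← Finset.mul_sum,
    ← Finset.sum_mul, ← inner_sum, ← sum_inner, real_inner_self_eq_norm_sq]
  ring

theorem sq_mul_sum_add_two_mul_sum_sq_le [Fintype ι] {w σ : ι → ℝ} {v : ι → E} {t : ℝ}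
    (hw : ∀ i, 0 ≤ w i) (hw1 : ∑ i, w i = 1) (hv : ∑ i, w i • v i = 0)
    (hnorm : ∀ i, ‖v i‖ = t * σ i) (hdist : ∀ i j, i ≠ j → ‖v i - v j‖ ≤ σ i + σ j) :
    t ^ 2 * ∑ i, w i * σ i ^ 2 + 2 * ∑ i, (w i * σ i) ^ 2 ≤
      ∑ i, w i * σ i ^ 2 + (∑ i, w i * σ i) ^ 2 := by
  classical
  have hcentered : ∑ i, ∑ j, w i * w j * ‖v i - v j‖ ^ 2 = 2 * (t ^ 2 * ∑ i, w i * σ i ^ 2) := by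
    have hterm : ∀ i, w i * ‖v i‖ ^ 2 = t ^ 2 * (w i * σ i ^ 2) := fun i => by
      rw [hnorm]; ring
    simp only [sum_sum_mul_mul_norm_sub_sq, hw1, hv, norm_zero, hterm, ← Finset.mul_sum]
    ring
  have hdiag : ∑ i, ∑ j, (if i = j then w i * w j * (σ i + σ j) ^ 2 else 0) =
      2 * (2 * ∑ i, (w i * σ i) ^ 2) := by
    have hterm : ∀ i, w i * w i * (σ i + σ i) ^ 2 = 4 * (w i * σ i) ^ 2 := fun i => by ring
    simp only [Finset.sum_ite_eq, Finset.mem_univ, if_true, hterm, ← Finset.mul_sum]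
    ring
  have hexpand : ∑ i, ∑ j, w i * w j * (σ i + σ j) ^ 2 =
      2 * (∑ i, w i * σ i ^ 2 + (∑ i, w i * σ i) ^ 2) := by
    have hterm : ∀ i j, w i * w j * (σ i + σ j) ^ 2 = w i * σ i ^ 2 * w j +
        w i * (w j * σ j ^ 2) + 2 * (w i * σ i * (w j * σ j)) := fun i j => by ring
    simp only [hterm, Finset.sum_add_distrib, ← Finset.mul_sum, ← Finset.sum_mul, hw1]
    ring
  -- Since `‖v i - v i‖ = 0`, the termwise bound survives adding the diagonal `(2 * w i * σ i) ^ 2`.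
  have hbound : ∑ i, ∑ j, (w i * w j * ‖v i - v j‖ ^ 2 +
      if i = j then w i * w j * (σ i + σ j) ^ 2 else 0) ≤
      ∑ i, ∑ j, w i * w j * (σ i + σ j) ^ 2 := by
    gcongr with i _ j _
    split_ifs with hij
    · simp [hij]
    · rw [add_zero]
      gcongr
      · exact mul_nonneg (hw i) (hw j)
      · exact hdist i j hij
  simp only [Finset.sum_add_distrib, hcentered, hdiag, hexpand] at hbound
  linarith

/-- Jung's inequality for a single simplex, written around its weighted barycentre. -/
theorem sq_le_two_sub_two_div_card [Fintype ι] {w σ : ι → ℝ} {v : ι → E} {t : ℝ}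
    (hw : ∀ i, 0 ≤ w i) (hw1 : ∑ i, w i = 1) (hv : ∑ i, w i • v i = 0)
    (hσ : ∀ i, 0 < σ i) (hnorm : ∀ i, ‖v i‖ = t * σ i)
    (hdist : ∀ i j, i ≠ j → ‖v i - v j‖ ≤ σ i + σ j) :
    t ^ 2 ≤ 2 - 2 / Fintype.card ι := by
  have hne : (Finset.univ : Finset ι).Nonempty :=
    Finset.nonempty_of_sum_ne_zero (hw1.symm ▸ one_ne_zero)
  obtain hk | hk : Fintype.card ι = 1 ∨ 2 ≤ Fintype.card ι := by
    have := Finset.card_pos.2 hne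
    rw [Finset.card_univ] at this
    omega
  · have : Unique ι := (Fintype.card_eq_one_iff_nonempty_unique.1 hk).some
    rw [Fintype.sum_unique] at hw1 hv
    rw [hw1, one_smul] at hv
    have ht : t * σ default = 0 := by rw [← hnorm, hv, norm_zero]
    rw [(mul_eq_zero.1 ht).resolve_right (hσ _).ne', hk]
    norm_num
  have hvar := sq_mul_sum_add_two_mul_sum_sq_le hw hw1 hv hnorm hdist
  set Q := ∑ i, w i * σ i ^ 2
  set L := ∑ i, w i * σ i
  set W := ∑ i, (w i * σ i) ^ 2
  have hQ : 0 < Q := by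
    obtain ⟨i, -, hi⟩ := Finset.exists_lt_of_sum_lt (s := Finset.univ) (f := 0) (g := w)
      (by simp [hw1])
    exact Finset.sum_pos' (fun j _ => mul_nonneg (hw j) (sq_nonneg _))
      ⟨i, Finset.mem_univ i, mul_pos hi (pow_pos (hσ i) 2)⟩
  have hLQ : L ^ 2 ≤ Q := by
    simpa [hw1] using Finset.sum_sq_le_sum_mul_sum_of_sq_le_mul Finset.univ
      (r := fun i => w i * σ i) (fun i _ => hw i) (fun i _ => mul_nonneg (hw i) (sq_nonneg (σ i)))
      (fun i _ => le_of_eq (by ring))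
  have hLW : 2 / Fintype.card ι * L ^ 2 ≤ 2 * W := by
    have hk : (0 : ℝ) < Fintype.card ι := by positivity
    rw [div_mul_eq_mul_div, div_le_iff₀ hk]
    have hcs := sq_sum_le_card_mul_sum_sq (s := Finset.univ) (f := fun i => w i * σ i)
    rw [Finset.card_univ] at hcs
    linarith
  have hk : 2 / (Fintype.card ι : ℝ) ≤ 1 := by
    rw [div_le_one (by positivity)]
    exact_mod_cast hk
  refine le_of_mul_le_mul_right ?_ hQ
  nlinarith [mul_le_mul_of_nonneg_left hLQ (sub_nonneg.2 hk)]

theorem exists_inner_sub_pos_of_notMem {t : Set E} [CompleteSpace E] (ht : Convex ℝ t)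
    (htc : IsClosed t) {x : E} (hx : x ∉ t) : ∃ v : E, ∀ p ∈ t, 0 < ⟪v, p - x⟫ := by
  obtain ⟨f, u, hfx, hft⟩ := geometric_hahn_banach_point_closed ht htc hx
  refine ⟨(InnerProductSpace.toDual ℝ E).symm f, fun p hp => ?_⟩
  rw [InnerProductSpace.toDual_symm_apply, map_sub]
  linarith [hft p hp]

theorem eventually_dist_add_smul_lt {x p v : E} (hv : 0 < ⟪v, p - x⟫) :
    ∀ᶠ η in 𝓝[>] (0 : ℝ), dist (x + η • v) p < dist x p := by
  have hsmall : ∀ᶠ η in 𝓝 (0 : ℝ), η * ‖v‖ ^ 2 < 2 * ⟪v, p - x⟫ :=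
    (continuous_mul_const _).tendsto' 0 0 (zero_mul _) |>.eventually (gt_mem_nhds (by linarith))
  filter_upwards [hsmall.filter_mono nhdsWithin_le_nhds, self_mem_nhdsWithin] with η hη hpos
  refine lt_of_pow_lt_pow_left₀ 2 dist_nonneg ?_
  have hexp : dist (x + η • v) p ^ 2 =
      dist x p ^ 2 - η * (2 * ⟪v, p - x⟫ - η * ‖v‖ ^ 2) := by
    rw [dist_eq_norm, dist_eq_norm, show x + η • v - p = η • v - (p - x) by abel,
      norm_sub_sq_real, real_inner_smul_left, norm_smul, Real.norm_eq_abs, mul_pow, sq_abs,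
      ← norm_neg (x - p), neg_sub]
    ring
  rw [hexp]
  nlinarith [mul_pos (Set.mem_Ioi.1 hpos) (sub_pos.2 hη)]

theorem frequently_forall_dist_lt_of_notMem_convexHull [CompleteSpace E] {S : Set E}
    (hS : S.Finite) {x : E} (hx : x ∉ convexHull ℝ S) :
    ∃ᶠ y in 𝓝 x, ∀ p ∈ S, dist y p < dist x p := by
  obtain ⟨v, hv⟩ := exists_inner_sub_pos_of_notMem (convex_convexHull ℝ S)
    (hS.isCompact_convexHull (𝕜 := ℝ)).isClosed hx
  have hmove : Tendsto (fun η : ℝ => x + η • v) (𝓝[>] 0) (𝓝 x) := by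
    exact (Continuous.tendsto' (by fun_prop) 0 x (by simp)).mono_left nhdsWithin_le_nhds
  refine hmove.frequently (Eventually.frequently ?_)
  exact hS.eventually_all.2 fun p hp =>
    eventually_dist_add_smul_lt (hv p (subset_convexHull ℝ S hp))

/-- A minimiser `x` of `max_i dist x (c i) / s i` lies in the convex hull of the centres where the
maximum is attained: otherwise moving `x` towards that hull shrinks every active distance, while
the inactive ones keep some slack. -/
theorem mem_convexHull_image_setOf_dist_eq [CompleteSpace E] {ι : Type*} [Finite ι]
    {c : ι → E} {s : ι → ℝ} {x : E} {t : ℝ} (hx : ∀ i, dist x (c i) ≤ t * s i)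
    (hmin : ∀ y, ∃ i, t * s i ≤ dist y (c i)) :
    x ∈ convexHull ℝ (c '' {i | dist x (c i) = t * s i}) := by
  by_contra hnot
  set A := {i | dist x (c i) = t * s i}
  have hslack : ∀ᶠ y in 𝓝 x, ∀ i ∈ Aᶜ, dist y (c i) < t * s i :=
    (Set.toFinite Aᶜ).eventually_all.2 fun i hi =>
      (continuous_id.dist continuous_const).continuousAt.eventually_lt continuousAt_const
        ((hx i).lt_of_ne hi)
  obtain ⟨y, hyA, hyAc⟩ := ((frequently_forall_dist_lt_of_notMem_convexHull
    ((Set.toFinite A).image c) hnot).and_eventually hslack).exists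
  obtain ⟨i, hi⟩ := hmin y
  by_cases hiA : i ∈ A
  · exact (hyA (c i) ⟨i, hiA, rfl⟩).not_ge (hiA.symm ▸ hi)
  · exact (hyAc i hiA).not_ge hi

end InnerProductSpace

/-- `x` minimises `max_i dist x (c i) / s i`, with minimum `t`. -/
theorem exists_dist_le_mul_forall_exists_mul_le_dist {ι X : Type*} [PseudoMetricSpace X]
    [ProperSpace X] [Nonempty X] [Fintype ι] [Nonempty ι] (c : ι → X) {s : ι → ℝ}
    (hs : ∀ i, 0 < s i) :
    ∃ x t, (∀ i, dist x (c i) ≤ t * s i) ∧ ∀ y, ∃ i, t * s i ≤ dist y (c i) := by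
  set f : X → ℝ := fun y => Finset.univ.sup' Finset.univ_nonempty fun i => dist y (c i) / s i
  have hf : Continuous f := Continuous.finset_sup'_apply _ fun i _ => by fun_prop
  have hle : ∀ y i, dist y (c i) ≤ f y * s i := fun y i =>
    (div_le_iff₀ (hs i)).1 (Finset.le_sup' (fun i => dist y (c i) / s i) (Finset.mem_univ i))
  obtain i₀ := Classical.arbitrary ι
  have hcoercive : Tendsto f (cocompact X) atTop :=
    tendsto_atTop_mono
      (fun y => Finset.le_sup' (fun i => dist y (c i) / s i) (Finset.mem_univ i₀))
      ((tendsto_dist_right_cocompact_atTop (c i₀)).atTop_div_const (hs i₀))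
  obtain ⟨x, hx⟩ := hf.exists_forall_le hcoercive
  refine ⟨x, f x, hle x, fun y => ?_⟩
  obtain ⟨i, -, hi⟩ :=
    Finset.exists_mem_eq_sup' Finset.univ_nonempty fun i => dist y (c i) / s i
  exact ⟨i, (le_div_iff₀ (hs i)).1 (hi ▸ hx y)⟩

theorem exists_dist_le_sqrt_mul_of_dist_le_add {ι E : Type*} [Fintype ι]
    [NormedAddCommGroup E] [InnerProductSpace ℝ E] [FiniteDimensional ℝ E]
    (c : ι → E) {s : ι → ℝ} (hs : ∀ i, 0 < s i) (h : ∀ i j, dist (c i) (c j) ≤ s i + s j) :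
    ∃ x, ∀ i, dist x (c i) ≤
      √(2 * Module.finrank ℝ E / (Module.finrank ℝ E + 1)) * s i := by
  cases isEmpty_or_nonempty ι
  · exact ⟨0, isEmptyElim⟩
  obtain ⟨x, t, hx, hmin⟩ := exists_dist_le_mul_forall_exists_mul_le_dist c hs
  obtain ⟨κ, _, z, w, hzc, hz, hw, hw1, hwz⟩ :=
    eq_pos_convex_span_of_mem_convexHull (mem_convexHull_image_setOf_dist_eq hx hmin)
  choose idx hidx hcz using fun k => hzc (Set.mem_range_self k)
  have hcard : Fintype.card κ ≤ Module.finrank ℝ E + 1 :=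
    hz.card_le_finrank_succ.trans (Nat.add_le_add_right (Submodule.finrank_le _) 1)
  have hcard_pos : 0 < Fintype.card κ := Fintype.card_pos_iff.2
    (Finset.univ_nonempty_iff.1 (Finset.nonempty_of_sum_ne_zero (hw1.symm ▸ one_ne_zero)))
  have htsq : t ^ 2 ≤ 2 - 2 / Fintype.card κ := by
    refine sq_le_two_sub_two_div_card (v := fun k => z k - x) (σ := fun k => s (idx k))
      (fun k => (hw k).le) hw1 ?_ (fun k => hs _) (fun k => ?_) (fun k l _ => ?_)
    · simp only [smul_sub, Finset.sum_sub_distrib, ← Finset.sum_smul, hw1, hwz, one_smul,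
        sub_self]
    · rw [← dist_eq_norm, dist_comm, ← hcz, hidx k]
    · rw [sub_sub_sub_cancel_right, ← dist_eq_norm, ← hcz, ← hcz]
      exact h _ _
  refine ⟨x, fun i =>
    (hx i).trans (mul_le_mul_of_nonneg_right (Real.le_sqrt_of_sq_le ?_) (hs i).le)⟩
  calc t ^ 2 ≤ 2 - 2 / Fintype.card κ := htsq
    _ ≤ 2 - 2 / (Module.finrank ℝ E + 1) := by gcongr; exact_mod_cast hcard
    _ = 2 * Module.finrank ℝ E / (Module.finrank ℝ E + 1) := by field_simp; ring

section Scales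

variable {ι X : Type*} [PseudoMetricSpace X]

def vietorisRipsScales (c : ι → X) (r : ι → ℝ) : Set ℝ :=
  {lam | 0 ≤ lam ∧
    ∀ i j, (closedBall (c i) (lam * r i) ∩ closedBall (c j) (lam * r j)).Nonempty}

def cechScales (c : ι → X) (r : ι → ℝ) : Set ℝ :=
  {lam | 0 ≤ lam ∧ (⋂ i, closedBall (c i) (lam * r i)).Nonempty}

theorem cechScales_subset_vietorisRipsScales (c : ι → X) (r : ι → ℝ) :
    cechScales c r ⊆ vietorisRipsScales c r := fun _ ⟨hlam, p, hp⟩ =>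
  ⟨hlam, fun i j => ⟨p, Set.mem_iInter.1 hp i, Set.mem_iInter.1 hp j⟩⟩

theorem cechScales_nonempty [Fintype ι] [Nonempty X] (c : ι → X) {r : ι → ℝ}
    (hr : ∀ i, 0 < r i) : (cechScales c r).Nonempty := by
  obtain p := Classical.arbitrary X
  have hnonneg : ∀ i ∈ Finset.univ, 0 ≤ dist p (c i) / r i :=
    fun i _ => div_nonneg dist_nonneg (hr i).le
  refine ⟨∑ i, dist p (c i) / r i, Finset.sum_nonneg hnonneg, p, Set.mem_iInter.2 fun i => ?_⟩
  rw [mem_closedBall, ← div_le_iff₀ (hr i)]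
  exact Finset.single_le_sum hnonneg (Finset.mem_univ i)

theorem mem_vietorisRipsScales_of_le {c : ι → X} {r : ι → ℝ} (hr : ∀ i, 0 ≤ r i)
    {lam lam' : ℝ}
    (h : lam ∈ vietorisRipsScales c r) (hle : lam ≤ lam') : lam' ∈ vietorisRipsScales c r :=
  ⟨h.1.trans hle, fun i j => (h.2 i j).mono (Set.inter_subset_inter
    (closedBall_subset_closedBall (by gcongr; exact hr i))
    (closedBall_subset_closedBall (by gcongr; exact hr j)))⟩

theorem dist_le_of_mem_vietorisRipsScales {c : ι → X} {r : ι → ℝ} {lam : ℝ}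
    (h : lam ∈ vietorisRipsScales c r) (i j : ι) :
    dist (c i) (c j) ≤ lam * r i + lam * r j := by
  obtain ⟨p, hpi, hpj⟩ := h.2 i j
  exact (dist_triangle (c i) p (c j)).trans (add_le_add (mem_closedBall'.1 hpi) hpj)

end Scales

theorem sqrt_mul_mem_cechScales {ι E : Type*} [Fintype ι] [NormedAddCommGroup E]
    [InnerProductSpace ℝ E] [FiniteDimensional ℝ E] {c : ι → E} {r : ι → ℝ}
    (hr : ∀ i, 0 < r i) {lam : ℝ} (h : lam ∈ vietorisRipsScales c r) (hlam : 0 < lam) :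
    √(2 * Module.finrank ℝ E / (Module.finrank ℝ E + 1)) * lam ∈ cechScales c r := by
  obtain ⟨x, hx⟩ := exists_dist_le_sqrt_mul_of_dist_le_add c (fun i => mul_pos hlam (hr i))
    (dist_le_of_mem_vietorisRipsScales h)
  refine ⟨by positivity, x, Set.mem_iInter.2 fun i => ?_⟩
  rw [mem_closedBall, mul_assoc]
  exact hx i

/-- The Čech scale is bounded between the Vietoris–Rips scale and its multiple by the
Jung constant: `ν_M ≤ μ_M ≤ √(2d/(d+1)) ν_M`. -/
theorem stmt_11 {d m : ℕ} (c : Fin m → EuclideanSpace ℝ (Fin d)) (r : Fin m → ℝ)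
    (hr : ∀ i, 0 < r i)
    (ν : ℝ) (hν : ν = sInf {lam : ℝ | 0 ≤ lam ∧
      ∀ i j, (closedBall (c i) (lam * r i) ∩ closedBall (c j) (lam * r j)).Nonempty})
    (μ : ℝ) (hμ : μ = sInf {lam : ℝ | 0 ≤ lam ∧
      (⋂ i, closedBall (c i) (lam * r i)).Nonempty}) :
    ν ≤ μ ∧ μ ≤ Real.sqrt (2 * d / (d + 1)) * ν := by
  change ν = sInf (vietorisRipsScales c r) at hν
  change μ = sInf (cechScales c r) at hμ
  have hcech := cechScales_nonempty c hr
  have hrips := hcech.mono (cechScales_subset_vietorisRipsScales c r)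
  constructor
  · rw [hν, hμ]
    exact csInf_le_csInf ⟨0, fun _ h => h.1⟩ hcech (cechScales_subset_vietorisRipsScales c r)
  have hν0 : 0 ≤ ν := hν ▸ le_csInf hrips fun _ h => h.1
  -- Every `lam > ν` is a positive Vietoris–Rips scale; let `lam` decrease to `ν`.
  refine ge_of_tendsto (x := 𝓝[>] ν) (((continuous_const_mul _).tendsto ν).mono_left
    nhdsWithin_le_nhds) (eventually_nhdsWithin_of_forall fun lam hlam => ?_)
  obtain ⟨lam₀, hlam₀, hlt⟩ := exists_lt_of_csInf_lt hrips (hν ▸ hlam)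
  have hmem := sqrt_mul_mem_cechScales hr
    (mem_vietorisRipsScales_of_le (fun i => (hr i).le) hlam₀ hlt.le) (hν0.trans_lt hlam)
  rw [finrank_euclideanSpace_fin] at hmem
  exact hμ ▸ csInf_le ⟨0, fun _ h => h.1⟩ hmem
end

section
/- (Helly's theorem for minimal axis-aligned bounding boxes) Let M = {D₁, …, D_{d+1}} be d+1 closed balls in ℝᵈ such that every d of them have nonempty intersection, and suppose D = ⋂ⱼ Dⱼ ≠ ∅. Then for every coordinate i, inf{π_i(x) : x ∈ D} = max over j of inf{π_i(x) : x ∈ ⋂_{k ≠ j} D_k}, and sup{π_i(x) : x ∈ D} = min over j of sup{π_i(x) : x ∈ ⋂_{k ≠ j} D_k}. Equivalently, AABB(M) = ⋂ⱼ₌₁^{d+1} AABB(M \ {Dⱼ}). -/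
/-!
Fix a coordinate `i`, let `D` be the intersection of all the balls and `Dⱼ` the intersection with
ball `j` left out, and put `m = maxⱼ min π_i(Dⱼ)`. Among the `d + 2` convex sets formed by the
balls and the halfspace `{π_i ≤ m}`, any `d + 1` meet: leaving out the halfspace leaves `D ≠ ∅`,
and leaving out ball `j` leaves `Dⱼ ∩ {π_i ≤ m}`, which contains the minimiser of `π_i` on the
compact set `Dⱼ`. By Helly's theorem `D` has a point with `π_i ≤ m`, so `min π_i(D) ≤ m`; the
reverse inequality holds because `D ⊆ Dⱼ`. The maxima are symmetric.
-/

open Metric EuclideanSpace Module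

section

variable {ι 𝕜 E : Type*} [Fintype ι] [Field 𝕜] [LinearOrder 𝕜] [IsStrictOrderedRing 𝕜]
  [AddCommGroup E] [Module 𝕜 E] [FiniteDimensional 𝕜 E]

theorem Convex.nonempty_iInter_inter_of_forall_ne {B : ι → Set E} (hB : ∀ j, Convex 𝕜 (B j))
    {H : Set E} (hH : Convex 𝕜 H) (hcard : finrank 𝕜 E < Fintype.card ι)
    (hD : (⋂ j, B j).Nonempty) (hDj : ∀ j, ((⋂ k, ⋂ (_ : k ≠ j), B k) ∩ H).Nonempty) :
    ((⋂ j, B j) ∩ H).Nonempty := by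
  classical
  let F : Option ι → Set E := fun o => o.elim H B
  have hF : (⋂ o ∈ (Finset.univ : Finset (Option ι)), F o).Nonempty := by
    apply Convex.helly_theorem' (𝕜 := 𝕜)
    · rintro (_ | j) -
      exacts [hH, hB j]
    rintro I - hI
    -- `I` has at most `finrank 𝕜 E + 1` of the `card ι + 1` indices, so it misses one.
    obtain ⟨o, -, ho⟩ := Finset.exists_mem_notMem_of_card_lt_card
      (s := I) (t := Finset.univ) (by simp only [Finset.card_univ, Fintype.card_option]; omega)
    rcases o with _ | j
    · refine hD.mono fun x hx => Set.mem_iInter₂.2 fun o ho' => ?_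
      rcases o with _ | k
      · exact absurd ho' ho
      · exact Set.mem_iInter.1 hx k
    · refine (hDj j).mono fun x (hx : x ∈ _ ∩ H) => Set.mem_iInter₂.2 fun o ho' => ?_
      rcases o with _ | k
      · exact hx.2
      · exact Set.mem_iInter₂.1 hx.1 k (by rintro rfl; exact ho ho')
  obtain ⟨x, hx⟩ := hF
  simp only [Finset.mem_univ, Set.iInter_true] at hx
  exact ⟨x, Set.mem_iInter.2 fun j => Set.mem_iInter.1 hx (some j), Set.mem_iInter.1 hx none⟩

end

section

variable {ι E : Type*} [Fintype ι] [NormedAddCommGroup E] [NormedSpace ℝ E]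
  [FiniteDimensional ℝ E] {K : ι → Set E}

theorem sInf_image_iInter_eq_iSup (hK : ∀ j, Convex ℝ (K j))
    (hcard : finrank ℝ E < Fintype.card ι)
    (hcomp : ∀ j, IsCompact (⋂ k, ⋂ (_ : k ≠ j), K k)) (hD : (⋂ j, K j).Nonempty)
    (f : E →L[ℝ] ℝ) :
    sInf (f '' ⋂ j, K j) = ⨆ j, sInf (f '' ⋂ k, ⋂ (_ : k ≠ j), K k) := by
  have hsub j : ⋂ j, K j ⊆ ⋂ k, ⋂ (_ : k ≠ j), K k :=
    Set.subset_iInter₂ fun k _ => Set.iInter_subset K k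
  have hbdd j : BddBelow (f '' ⋂ k, ⋂ (_ : k ≠ j), K k) :=
    ((hcomp j).image f.continuous).bddBelow
  have : Nonempty ι := Fintype.card_pos_iff.1 (by omega)
  have hbddm : BddAbove (Set.range fun j => sInf (f '' ⋂ k, ⋂ (_ : k ≠ j), K k)) :=
    (Set.finite_range _).bddAbove
  set m := ⨆ j, sInf (f '' ⋂ k, ⋂ (_ : k ≠ j), K k)
  refine le_antisymm ?_ (ciSup_le fun j => csInf_le_csInf (hbdd j) (hD.image f)
    (Set.image_mono (hsub j)))
  have hmin j : ((⋂ k, ⋂ (_ : k ≠ j), K k) ∩ {x | f x ≤ m}).Nonempty := by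
    obtain ⟨x, hx, hfx⟩ := ((hcomp j).image f.continuous).sInf_mem ((hD.mono (hsub j)).image f)
    exact ⟨x, hx, hfx.le.trans (le_ciSup hbddm j)⟩
  obtain ⟨x, hxD, hxm⟩ := Convex.nonempty_iInter_inter_of_forall_ne hK
    (convex_halfSpace_le f.isLinear m) hcard hD hmin
  exact (csInf_le ((hbdd (Classical.arbitrary ι)).mono (Set.image_mono (hsub _)))
    ⟨x, hxD, rfl⟩).trans hxm

theorem sSup_image_iInter_eq_iInf (hK : ∀ j, Convex ℝ (K j))
    (hcard : finrank ℝ E < Fintype.card ι)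
    (hcomp : ∀ j, IsCompact (⋂ k, ⋂ (_ : k ≠ j), K k)) (hD : (⋂ j, K j).Nonempty)
    (f : E →L[ℝ] ℝ) :
    sSup (f '' ⋂ j, K j) = ⨅ j, sSup (f '' ⋂ k, ⋂ (_ : k ≠ j), K k) := by
  have hsub j : ⋂ j, K j ⊆ ⋂ k, ⋂ (_ : k ≠ j), K k :=
    Set.subset_iInter₂ fun k _ => Set.iInter_subset K k
  have hbdd j : BddAbove (f '' ⋂ k, ⋂ (_ : k ≠ j), K k) :=
    ((hcomp j).image f.continuous).bddAbove
  have : Nonempty ι := Fintype.card_pos_iff.1 (by omega)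
  have hbddm : BddBelow (Set.range fun j => sSup (f '' ⋂ k, ⋂ (_ : k ≠ j), K k)) :=
    (Set.finite_range _).bddBelow
  set m := ⨅ j, sSup (f '' ⋂ k, ⋂ (_ : k ≠ j), K k)
  refine le_antisymm (le_ciInf fun j => csSup_le_csSup (hbdd j) (hD.image f)
    (Set.image_mono (hsub j))) ?_
  have hmax j : ((⋂ k, ⋂ (_ : k ≠ j), K k) ∩ {x | m ≤ f x}).Nonempty := by
    obtain ⟨x, hx, hfx⟩ := ((hcomp j).image f.continuous).sSup_mem ((hD.mono (hsub j)).image f)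
    exact ⟨x, hx, (ciInf_le hbddm j).trans hfx.ge⟩
  obtain ⟨x, hxD, hxm⟩ := Convex.nonempty_iInter_inter_of_forall_ne hK
    (convex_halfSpace_ge f.isLinear m) hcard hD hmax
  exact hxm.trans (le_csSup ((hbdd (Classical.arbitrary ι)).mono (Set.image_mono (hsub _)))
    ⟨x, hxD, rfl⟩)

end

theorem stmt_15_general {d : ℕ} (c : Fin (d + 1) → EuclideanSpace ℝ (Fin d))
    (r : Fin (d + 1) → ℝ)
    (hD : (⋂ j, closedBall (c j) (r j)).Nonempty) :
    ∀ i : Fin d,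
      sInf ((fun x => x i) '' ⋂ j, closedBall (c j) (r j)) =
        ⨆ j, sInf ((fun x => x i) '' ⋂ k, ⋂ (_ : k ≠ j), closedBall (c k) (r k)) ∧
      sSup ((fun x => x i) '' ⋂ j, closedBall (c j) (r j)) =
        ⨅ j, sSup ((fun x => x i) '' ⋂ k, ⋂ (_ : k ≠ j), closedBall (c k) (r k)) := by
  intro i
  have hcard : finrank ℝ (EuclideanSpace ℝ (Fin d)) < Fintype.card (Fin (d + 1)) := by simp
  have : Nontrivial (Fin (d + 1)) := Fin.nontrivial_iff_two_le.2 (Nat.succ_le_succ i.pos)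
  have hcomp j : IsCompact (⋂ k, ⋂ (_ : k ≠ j), closedBall (c k) (r k)) := by
    obtain ⟨k, hk⟩ := exists_ne j
    exact (isCompact_closedBall (c k) (r k)).of_isClosed_subset
      (isClosed_biInter fun _ _ => isClosed_closedBall) (Set.biInter_subset_of_mem hk)
  have hK j := convex_closedBall (c j) (r j)
  exact ⟨sInf_image_iInter_eq_iSup hK hcard hcomp hD (proj i),
    sSup_image_iInter_eq_iInf hK hcard hcomp hD (proj i)⟩

/-- Helly's theorem for minimal axis-aligned bounding boxes: for `d + 1` closed balls
in `ℝᵈ` whose total intersection `D` is nonempty (and every `d` of them intersect),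
the extremes of the AABB of `D` in each coordinate are the max of the infima, resp.
the min of the suprema, of the coordinate over the intersections with one ball
removed; i.e. `AABB(M) = ⋂ⱼ AABB(M \ {Dⱼ})`. -/
theorem stmt_15 {d : ℕ} (c : Fin (d + 1) → EuclideanSpace ℝ (Fin d))
    (r : Fin (d + 1) → ℝ) (hr : ∀ j, 0 < r j)
    (hpart : ∀ j, (⋂ k, ⋂ (_ : k ≠ j), closedBall (c k) (r k)).Nonempty)
    (hD : (⋂ j, closedBall (c j) (r j)).Nonempty) :
    ∀ i : Fin d,
      sInf ((fun x => x i) '' ⋂ j, closedBall (c j) (r j)) =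
        ⨆ j, sInf ((fun x => x i) '' ⋂ k, ⋂ (_ : k ≠ j), closedBall (c k) (r k)) ∧
      sSup ((fun x => x i) '' ⋂ j, closedBall (c j) (r j)) =
        ⨅ j, sSup ((fun x => x i) '' ⋂ k, ⋂ (_ : k ≠ j), closedBall (c k) (r k)) :=
  stmt_15_general c r hD
end

section
/- Let M = {D₁, …, D_{d+1}} be d+1 closed balls in ℝᵈ such that every pair intersects and every d of them have nonempty intersection, but ⋂ⱼ₌₁^{d+1} Dⱼ = ∅. Then there exists a coordinate i ∈ {1, …, d} such that max over j of inf{π_i(x) : x ∈ ⋂_{k≠j} D_k} > min over j of sup{π_i(x) : x ∈ ⋂_{k≠j} D_k}. -/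
/-!
If no coordinate interval is inverted, then in the first coordinate the projections of the
compact convex sets `⋂_{k ≠ j} D_k` are intervals with a common point `t`, so every such set meets
the hyperplane `x₀ = t`. Inside that `(d - 1)`-dimensional hyperplane every `d` of the balls
therefore meet, and Helly's theorem yields a point common to all `d + 1` balls.
-/

open Metric EuclideanSpace
open Finset Module

theorem AffineSubspace.helly_theorem' {ι 𝕜 E : Type*} [Field 𝕜] [LinearOrder 𝕜]
    [IsStrictOrderedRing 𝕜] [AddCommGroup E] [Module 𝕜 E] (P : AffineSubspace 𝕜 E)
    [FiniteDimensional 𝕜 P.direction] {F : ι → Set E} {s : Finset ι}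
    (h_convex : ∀ i ∈ s, Convex 𝕜 (F i))
    (h_inter : ∀ I ⊆ s, #I ≤ finrank 𝕜 P.direction + 1 → ((P : Set E) ∩ ⋂ i ∈ I, F i).Nonempty) :
    ((P : Set E) ∩ ⋂ i ∈ s, F i).Nonempty := by
  obtain ⟨p, hp, -⟩ := h_inter ∅ (empty_subset s) (by simp)
  let G : ι → Set P.direction := fun i => P.direction.subtype ⁻¹' ((· + p) ⁻¹' F i)
  have hG : ∀ I : Finset ι, ((P : Set E) ∩ ⋂ i ∈ I, F i).Nonempty ↔ (⋂ i ∈ I, G i).Nonempty := by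
    intro I
    constructor
    · rintro ⟨x, hxP, hxF⟩
      refine ⟨⟨x - p, AffineSubspace.vsub_mem_direction hxP hp⟩, ?_⟩
      simpa [G] using hxF
    · rintro ⟨w, hw⟩
      refine ⟨w + p, AffineSubspace.vadd_mem_of_mem_direction w.2 hp, ?_⟩
      simpa [G] using hw
  rw [hG]
  exact Convex.helly_theorem'
    (fun i hi => ((h_convex i hi).translate_preimage_left p).linear_preimage _)
    fun I hI hcard => (hG I).1 (h_inter I hI hcard)

theorem Convex.helly_theorem_hyperplane {ι 𝕜 E : Type*} [Fintype ι] [Field 𝕜] [LinearOrder 𝕜]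
    [IsStrictOrderedRing 𝕜] [AddCommGroup E] [Module 𝕜 E] [FiniteDimensional 𝕜 E]
    {F : ι → Set E} (h_convex : ∀ i, Convex 𝕜 (F i)) (h_card : finrank 𝕜 E < Fintype.card ι)
    {φ : Module.Dual 𝕜 E} (hφ : φ ≠ 0) {t : 𝕜}
    (h_inter : ∀ j, ∃ x ∈ ⋂ k, ⋂ (_ : k ≠ j), F k, φ x = t) :
    ∃ x ∈ ⋂ k, F k, φ x = t := by
  have : Nonempty ι := Fintype.card_pos_iff.1 (h_card.trans_le' (Nat.zero_le _))
  obtain ⟨v, -, hv⟩ := h_inter (Classical.arbitrary ι)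
  let P := AffineSubspace.mk' v (LinearMap.ker φ)
  have hP : ∀ x, x ∈ P ↔ φ x = t := fun x => by
    rw [AffineSubspace.mem_mk', vsub_eq_sub, LinearMap.mem_ker, map_sub, hv, sub_eq_zero]
  have h_dim : finrank 𝕜 P.direction + 1 = finrank 𝕜 E := by
    rw [AffineSubspace.direction_mk', Module.Dual.finrank_ker_add_one_of_ne_zero hφ]
  obtain ⟨x, hxP, hxF⟩ := P.helly_theorem' (s := univ) (fun i _ => h_convex i) fun I _ hI => by
    obtain ⟨j, -, hj⟩ := exists_mem_notMem_of_card_lt_card (s := I) (t := univ)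
      (by rw [card_univ]; omega)
    obtain ⟨x, hxF, hxt⟩ := h_inter j
    refine ⟨x, (hP x).2 hxt, Set.mem_iInter₂.2 fun k hk => ?_⟩
    exact Set.mem_iInter₂.1 hxF k (ne_of_mem_of_not_mem hk hj)
  exact ⟨x, by simpa using hxF, (hP x).1 hxP⟩

theorem iSup_csInf_mem_of_le_iInf_csSup {ι α : Type*} [Finite ι]
    [ConditionallyCompleteLinearOrder α] [TopologicalSpace α] [OrderTopology α] {A : ι → Set α} (h_compact : ∀ i, IsCompact (A i))
    (h_conn : ∀ i, IsPreconnected (A i)) (h_ne : ∀ i, (A i).Nonempty)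
    (h : ⨆ i, sInf (A i) ≤ ⨅ i, sSup (A i)) (j : ι) : ⨆ i, sInf (A i) ∈ A j :=
  (h_conn j).Icc_subset ((h_compact j).sInf_mem (h_ne j)) ((h_compact j).sSup_mem (h_ne j))
    ⟨le_ciSup (f := fun i => sInf (A i)) (Set.finite_range _).bddAbove j,
      h.trans (ciInf_le (f := fun i => sSup (A i)) (Set.finite_range _).bddBelow j)⟩

theorem stmt_16_general {d : ℕ} (c : Fin (d + 1) → EuclideanSpace ℝ (Fin d))
    (r : Fin (d + 1) → ℝ) (hr : ∀ j, 0 < r j)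
    (hpart : ∀ j, (⋂ k, ⋂ (_ : k ≠ j), closedBall (c k) (r k)).Nonempty)
    (hempty : (⋂ j, closedBall (c j) (r j)) = ∅) :
    ∃ i : Fin d,
      (⨅ j, sSup ((fun x => x i) '' ⋂ k, ⋂ (_ : k ≠ j), closedBall (c k) (r k))) <
        ⨆ j, sInf ((fun x => x i) '' ⋂ k, ⋂ (_ : k ≠ j), closedBall (c k) (r k)) := by
  cases d with
  | zero =>
    have h_center : c 0 ∈ ⋂ j, closedBall (c j) (r j) :=
      Set.mem_iInter.2 fun j => by rw [j.fin_one_eq_zero]; exact mem_closedBall_self (hr 0).le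
    simp [hempty] at h_center
  | succ d =>
    by_contra! h_box
    set S := fun j => ⋂ k, ⋂ (_ : k ≠ j), closedBall (c k) (r k)
    have hS_compact (j : Fin (d + 2)) : IsCompact (S j) := by
      obtain ⟨k, hk⟩ := exists_ne j
      exact (isCompact_closedBall (c k) (r k)).of_isClosed_subset
        (isClosed_biInter fun _ _ => isClosed_closedBall) (Set.biInter_subset_of_mem hk)
    have hS_convex (j : Fin (d + 2)) : Convex ℝ (S j) :=
      convex_iInter₂ fun _ _ => convex_closedBall _ _
    have h_proj := (proj (𝕜 := ℝ) (0 : Fin (d + 1))).continuous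
    have h_slice := iSup_csInf_mem_of_le_iInf_csSup (fun j => (hS_compact j).image h_proj)
      (fun j => (hS_convex j).isPreconnected.image _ h_proj.continuousOn)
      (fun j => (hpart j).image _) (h_box 0)
    obtain ⟨x, hx, -⟩ := Convex.helly_theorem_hyperplane (fun k => convex_closedBall (c k) (r k))
      (by simp) (φ := (proj 0 : EuclideanSpace ℝ (Fin (d + 1)) →L[ℝ] ℝ).toLinearMap)
      (fun h => by simpa using LinearMap.congr_fun h (single 0 1)) h_slice
    simp [hempty] at hx

/-- If `d + 1` closed balls in `ℝᵈ` pairwise intersect and every `d` of them have a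
common point, but the total intersection is empty, then in some coordinate the
intersection of the bounding boxes `AABB(M \ {Dⱼ})` is an inverted interval. -/
theorem stmt_16 {d : ℕ} (c : Fin (d + 1) → EuclideanSpace ℝ (Fin d))
    (r : Fin (d + 1) → ℝ) (hr : ∀ j, 0 < r j)
    (hpair : ∀ j k, (closedBall (c j) (r j) ∩ closedBall (c k) (r k)).Nonempty)
    (hpart : ∀ j, (⋂ k, ⋂ (_ : k ≠ j), closedBall (c k) (r k)).Nonempty)
    (hempty : (⋂ j, closedBall (c j) (r j)) = ∅) :
    ∃ i : Fin d,
      (⨅ j, sSup ((fun x => x i) '' ⋂ k, ⋂ (_ : k ≠ j), closedBall (c k) (r k))) <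
        ⨆ j, sInf ((fun x => x i) '' ⋂ k, ⋂ (_ : k ≠ j), closedBall (c k) (r k)) :=
  stmt_16_general c r hr hpart hempty
end

section
/- Let M = {closedBall(cᵢ, rᵢ)}ᵢ₌₁ᵐ be closed balls in ℝᵈ with positive radii, and let AABB(M_λ) be the minimal axis-aligned bounding box of ⋂ᵢ closedBall(cᵢ, λrᵢ) for λ ≥ μ_M (the Čech scale), assuming not all centers are equal. Then AABB(M_λ) degenerates to a single point if and only if λ = μ_M. -/
/-!
The Čech scale is the minimum of the continuous coercive function
`x ↦ maxᵢ dist x (cᵢ) / rᵢ`, attained at some `x₀`. Above that scale `x₀` lies in every open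
ball `ball cᵢ (λ rᵢ)`, so the intersection is a bounded neighbourhood of `x₀`, and every
coordinate, being an open map, sends it to a bounded neighbourhood in `ℝ`, whose infimum is
below its supremum. At the scale itself two distinct points of the intersection would have
their midpoint in every open ball by strict convexity, hence a strictly smaller value of the
function; so the intersection is `{x₀}`.
-/

open Metric Filter Topology

section ScaleFunction

variable {ι E : Type*} [Fintype ι] [Nonempty ι] [MetricSpace E]

noncomputable def ballScale (c : ι → E) (r : ι → ℝ) (x : E) : ℝ :=
  Finset.univ.sup' Finset.univ_nonempty fun i => dist x (c i) / r i

variable {c : ι → E} {r : ι → ℝ}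

theorem ballScale_lt_iff (hr : ∀ i, 0 < r i) {x : E} {lam : ℝ} :
    ballScale c r x < lam ↔ ∀ i, dist x (c i) < lam * r i := by
  simp [ballScale, Finset.sup'_lt_iff, div_lt_iff₀ (hr _)]

theorem mem_iInter_closedBall_iff_ballScale_le (hr : ∀ i, 0 < r i) {x : E} {lam : ℝ} :
    x ∈ ⋂ i, closedBall (c i) (lam * r i) ↔ ballScale c r x ≤ lam := by
  simp [ballScale, Finset.sup'_le_iff, div_le_iff₀ (hr _)]

theorem ballScale_nonneg (hr : ∀ i, 0 < r i) (x : E) : 0 ≤ ballScale c r x := by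
  obtain ⟨i⟩ := ‹Nonempty ι›
  exact (div_nonneg dist_nonneg (hr i).le).trans
    (Finset.le_sup' (fun i => dist x (c i) / r i) (Finset.mem_univ i))

theorem continuous_ballScale : Continuous (ballScale c r) :=
  Continuous.finset_sup'_apply _ fun _ _ => (continuous_id.dist continuous_const).div_const _

theorem tendsto_ballScale_cocompact [ProperSpace E] (hr : ∀ i, 0 < r i) :
    Tendsto (ballScale c r) (cocompact E) atTop := by
  obtain ⟨i⟩ := ‹Nonempty ι›
  exact tendsto_atTop_mono (fun x => Finset.le_sup' (fun i => dist x (c i) / r i)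
    (Finset.mem_univ i)) ((tendsto_dist_right_cocompact_atTop (c i)).atTop_div_const (hr i))

theorem exists_isLeast_ballScale [ProperSpace E] [Nonempty E] (hr : ∀ i, 0 < r i) :
    ∃ x₀, (∀ x, ballScale c r x₀ ≤ ballScale c r x) ∧
      IsLeast {lam : ℝ | 0 ≤ lam ∧ (⋂ i, closedBall (c i) (lam * r i)).Nonempty}
        (ballScale c r x₀) := by
  obtain ⟨x₀, hx₀⟩ :=
    continuous_ballScale.exists_forall_le (tendsto_ballScale_cocompact (c := c) hr)
  refine ⟨x₀, hx₀, ⟨ballScale_nonneg hr x₀, x₀, ?_⟩, ?_⟩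
  · exact (mem_iInter_closedBall_iff_ballScale_le hr).2 le_rfl
  · rintro lam ⟨-, x, hx⟩
    exact (hx₀ x).trans ((mem_iInter_closedBall_iff_ballScale_le hr).1 hx)

end ScaleFunction

theorem iInter_closedBall_mem_nhds {ι E : Type*} [Finite ι] [PseudoMetricSpace E]
    {c : ι → E} {r : ι → ℝ} (hr : ∀ i, 0 < r i) {μ lam : ℝ} (hlam : μ < lam) {x : E}
    (hx : x ∈ ⋂ i, closedBall (c i) (μ * r i)) :
    ⋂ i, closedBall (c i) (lam * r i) ∈ 𝓝 x := by
  refine iInter_mem.2 fun i => closedBall_mem_nhds_of_mem ?_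
  exact (mem_closedBall.1 (Set.mem_iInter.1 hx i)).trans_lt
    (mul_lt_mul_of_pos_right hlam (hr i))

theorem subsingleton_iInter_closedBall {ι E : Type*} [Fintype ι] [Nonempty ι]
    [NormedAddCommGroup E] [NormedSpace ℝ E] [StrictConvexSpace ℝ E]
    {c : ι → E} {r : ι → ℝ} (hr : ∀ i, 0 < r i) {μ : ℝ} (hmin : ∀ x, μ ≤ ballScale c r x) :
    (⋂ i, closedBall (c i) (μ * r i)).Subsingleton := by
  intro x hx y hy
  by_contra hne
  have hmid : ∀ i, dist ((1 / 2 : ℝ) • x + (1 / 2 : ℝ) • y) (c i) < μ * r i := fun i =>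
    combo_mem_ball_of_ne (Set.mem_iInter.1 hx i) (Set.mem_iInter.1 hy i) hne
      (by norm_num) (by norm_num) (by norm_num)
  exact (hmin _).not_gt ((ballScale_lt_iff hr).2 hmid)

theorem Real.sInf_lt_sSup_of_mem_nhds {s : Set ℝ} (hs : Bornology.IsBounded s) {a : ℝ}
    (ha : s ∈ 𝓝 a) : sInf s < sSup s := by
  obtain ⟨b, hba, hb⟩ := Filter.Eventually.exists_lt ha
  obtain ⟨b', hab', hb'⟩ := Filter.Eventually.exists_gt ha
  rw [isBounded_iff_bddBelow_bddAbove] at hs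
  exact (csInf_le hs.1 hb).trans_lt (hba.trans (hab'.trans_le (le_csSup hs.2 hb')))

theorem sInf_image_lt_sSup_image_of_mem_nhds {E : Type*} [NormedAddCommGroup E]
    [NormedSpace ℝ E] [CompleteSpace E] {ℓ : E →L[ℝ] ℝ} (hℓ : Function.Surjective ℓ)
    {s : Set E} (hs : Bornology.IsBounded s) {x : E} (hx : s ∈ 𝓝 x) :
    sInf (ℓ '' s) < sSup (ℓ '' s) :=
  Real.sInf_lt_sSup_of_mem_nhds (ℓ.lipschitz.isBounded_image hs)
    ((ℓ.isOpenMap hℓ).image_mem_nhds hx)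

theorem EuclideanSpace.proj_surjective {ι : Type*} [Fintype ι] [DecidableEq ι] (i : ι) :
    Function.Surjective (EuclideanSpace.proj (𝕜 := ℝ) i) :=
  fun t => ⟨EuclideanSpace.single i t, by simp⟩

/-- For `λ ≥ μ_M`, the minimal axis-aligned bounding box of the intersection of the
rescaled balls degenerates to a single point if and only if `λ = μ_M`. -/
theorem stmt_18 {d m : ℕ} (c : Fin m → EuclideanSpace ℝ (Fin d)) (r : Fin m → ℝ)
    (hr : ∀ i, 0 < r i) (hc : ∃ i j, c i ≠ c j)
    (μ : ℝ) (hμ : μ = sInf {lam : ℝ | 0 ≤ lam ∧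
      (⋂ i, closedBall (c i) (lam * r i)).Nonempty}) :
    ∀ lam : ℝ, μ ≤ lam →
      ((∀ i : Fin d,
          sInf ((fun x => x i) '' ⋂ j, closedBall (c j) (lam * r j)) =
            sSup ((fun x => x i) '' ⋂ j, closedBall (c j) (lam * r j))) ↔
        lam = μ) := by
  obtain ⟨i₀, j₀, hij⟩ := hc
  have : Nonempty (Fin m) := ⟨i₀⟩
  obtain ⟨x₀, hmin, hleast⟩ := exists_isLeast_ballScale (c := c) hr
  obtain rfl : μ = ballScale c r x₀ := hμ ▸ hleast.csInf_eq
  have hx₀ : x₀ ∈ ⋂ i, closedBall (c i) (ballScale c r x₀ * r i) :=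
    (mem_iInter_closedBall_iff_ballScale_le hr).2 le_rfl
  intro lam hlam
  constructor
  · intro hbox
    by_contra hne
    obtain ⟨k, -⟩ : ∃ k, c i₀ k ≠ c j₀ k := by
      by_contra! h
      exact hij (PiLp.ext h)
    have hbdd : Bornology.IsBounded (⋂ j, closedBall (c j) (lam * r j)) :=
      isBounded_closedBall.subset (Set.iInter_subset _ i₀)
    exact (sInf_image_lt_sSup_image_of_mem_nhds (EuclideanSpace.proj_surjective k) hbdd
      (iInter_closedBall_mem_nhds hr (hlam.lt_of_ne' hne) hx₀)).ne (hbox k)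
  · rintro rfl
    rw [(subsingleton_iInter_closedBall hr hmin).eq_singleton_of_mem hx₀]
    simp
end

section
/- Let D₁, D₂, D₃ be closed balls in ℝᵈ (d ≥ 2) with D = D₁ ∩ D₂ ∩ D₃ ≠ ∅, and fix a coordinate index i. Let p ∈ D minimize π_i over D. Then at least one of the following holds: (1) p = c_k − r_k e_i for some k ∈ {1,2,3} (p is a pole of one of the spheres ∂D_k); (2) p lies on the intersection of exactly two boundary spheres ∂D_j ∩ ∂D_k and minimizes π_i over D_j ∩ D_k; (3) p ∈ ∂D₁ ∩ ∂D₂ ∩ ∂D₃. -/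
/-!
Balls whose interior contains the minimizer `p` do not constrain the problem near `p`, and a
local minimum of a convex function on a convex set is global; so `p` still minimizes the
coordinate over the intersection of the balls whose boundary sphere passes through `p`.
It remains to count these active balls: with none, the coordinate would be minimized on all of
space; with one, `p` minimizes a linear functional over a single ball and is its pole; with two
or three we are in the remaining cases.
-/

open Metric EuclideanSpace

open Set Filter Topology

section

variable {E : Type*} [NormedAddCommGroup E]

theorem IsMinOn.iInter_closedBall_of_mem_sphere [NormedSpace ℝ E] {ι : Type*} [Finite ι]
    {c : ι → E} {r : ι → ℝ} {f : E → ℝ} (hf : ConvexOn ℝ univ f) {p : E}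
    (hp : p ∈ ⋂ k, closedBall (c k) (r k))
    (hmin : IsMinOn f (⋂ k, closedBall (c k) (r k)) p) :
    IsMinOn f (⋂ (k) (_ : p ∈ sphere (c k) (r k)), closedBall (c k) (r k)) p := by
  set s := ⋂ (k) (_ : p ∈ sphere (c k) (r k)), closedBall (c k) (r k)
  have hps : p ∈ s := mem_iInter₂.2 fun k _ => mem_iInter.1 hp k
  have hconv : Convex ℝ s := convex_iInter₂ fun k _ => convex_closedBall (c k) (r k)
  have hnhds : ⋂ k, closedBall (c k) (r k) ∈ 𝓝[s] p := by
    refine iInter_mem.2 fun k => ?_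
    by_cases hk : p ∈ sphere (c k) (r k)
    · exact mem_of_superset self_mem_nhdsWithin (iInter₂_subset k hk)
    · have hball : p ∈ ball (c k) (r k) := (mem_closedBall.1 (mem_iInter.1 hp k)).lt_of_ne hk
      exact mem_nhdsWithin_of_mem_nhds (closedBall_mem_nhds_of_mem hball)
  exact .of_isLocalMinOn_of_convexOn hps (hmin.filter_mono (le_principal_iff.2 hnhds))
    (hf.subset (subset_univ s) hconv)

theorem eq_sub_smul_of_isMinOn_inner_closedBall [InnerProductSpace ℝ E] {c p u : E} {r : ℝ}
    (hu : ‖u‖ = 1) (hp : p ∈ closedBall c r)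
    (hmin : IsMinOn (fun x => inner ℝ x u) (closedBall c r) p) :
    p = c - r • u := by
  have hr : 0 ≤ r := nonempty_closedBall.1 ⟨p, hp⟩
  have hpole : c - r • u ∈ closedBall c r := by
    simp [norm_smul, hu, abs_of_nonneg hr]
  have hinner : inner ℝ (p - c) u ≤ -r := by
    have := isMinOn_iff.1 hmin _ hpole
    simp only [inner_sub_left, real_inner_smul_left, real_inner_self_eq_norm_sq, hu] at this ⊢
    linarith
  have hdist : ‖p - c‖ ≤ r := by rwa [← dist_eq_norm, ← mem_closedBall]
  suffices h : ‖(p - c) + r • u‖ ^ 2 ≤ 0 by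
    have : (p - c) + r • u = 0 :=
      norm_eq_zero.1 <| (pow_eq_zero_iff two_ne_zero).1 (h.antisymm (sq_nonneg _))
    rw [← sub_eq_zero, ← this]
    abel
  rw [norm_add_sq_real, real_inner_smul_right, norm_smul, Real.norm_of_nonneg hr, hu]
  nlinarith [norm_nonneg (p - c)]

end

theorem stmt_19_general {d : ℕ} (c : Fin 3 → EuclideanSpace ℝ (Fin d))
    (r : Fin 3 → ℝ)
    (i : Fin d) (p : EuclideanSpace ℝ (Fin d))
    (hp : p ∈ ⋂ k, closedBall (c k) (r k))
    (hmin : ∀ x ∈ ⋂ k, closedBall (c k) (r k), p i ≤ x i) :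
    (∃ k, p = c k - r k • EuclideanSpace.single i (1 : ℝ)) ∨
    (∃ j k, j ≠ k ∧ p ∈ sphere (c j) (r j) ∩ sphere (c k) (r k) ∧
      ∀ x ∈ closedBall (c j) (r j) ∩ closedBall (c k) (r k), p i ≤ x i) ∨
    (∀ k, p ∈ sphere (c k) (r k)) := by
  classical
  set active := Finset.univ.filter fun k => p ∈ sphere (c k) (r k)
  have mem_active (k : Fin 3) : k ∈ active ↔ p ∈ sphere (c k) (r k) := by simp [active]
  have hactive : ∀ x, (∀ k ∈ active, x ∈ closedBall (c k) (r k)) → p i ≤ x i := by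
    have := IsMinOn.iInter_closedBall_of_mem_sphere
      ((EuclideanSpace.proj i).toLinearMap.convexOn convex_univ) hp (isMinOn_iff.2 hmin)
    exact fun x hx => isMinOn_iff.1 this x <| mem_iInter₂.2 fun k hk => hx k ((mem_active k).2 hk)
  have hcard : active.card ≤ 3 := active.card_le_univ.trans_eq (Fintype.card_fin 3)
  interval_cases h : active.card
  · have := hactive (p - single i 1) (by simp [Finset.card_eq_zero.1 h])
    norm_num at this
  · obtain ⟨k, hk⟩ := Finset.card_eq_one.1 h
    refine .inl ⟨k, eq_sub_smul_of_isMinOn_inner_closedBall (by simp) (mem_iInter.1 hp k) ?_⟩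
    refine isMinOn_iff.2 fun x hx => ?_
    simpa [inner_single_right] using hactive x (by simpa [hk] using hx)
  · obtain ⟨j, k, hjk, hjk'⟩ := Finset.card_eq_two.1 h
    refine .inr <| .inl ⟨j, k, hjk, ⟨(mem_active j).1 ?_, (mem_active k).1 ?_⟩,
      fun x hx => hactive x (by simpa [hjk'] using hx)⟩ <;> simp [hjk']
  · exact .inr <| .inr fun k =>
      (mem_active k).1 (Finset.eq_univ_of_card active h ▸ Finset.mem_univ k)

/-- Classification of a point minimizing the `i`-th coordinate over the intersection
of three closed balls: it is a south pole of one of the boundary spheres, or it lies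
on the intersection of two boundary spheres and minimizes the coordinate over the
intersection of those two balls, or it lies on all three boundary spheres. -/
theorem stmt_19 {d : ℕ} (hd : 2 ≤ d) (c : Fin 3 → EuclideanSpace ℝ (Fin d))
    (r : Fin 3 → ℝ) (hr : ∀ k, 0 < r k)
    (hD : (⋂ k, closedBall (c k) (r k)).Nonempty)
    (i : Fin d) (p : EuclideanSpace ℝ (Fin d))
    (hp : p ∈ ⋂ k, closedBall (c k) (r k))
    (hmin : ∀ x ∈ ⋂ k, closedBall (c k) (r k), p i ≤ x i) :
    (∃ k, p = c k - r k • EuclideanSpace.single i (1 : ℝ)) ∨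
    (∃ j k, j ≠ k ∧ p ∈ sphere (c j) (r j) ∩ sphere (c k) (r k) ∧
      ∀ x ∈ closedBall (c j) (r j) ∩ closedBall (c k) (r k), p i ≤ x i) ∨
    (∀ k, p ∈ sphere (c k) (r k)) :=
  stmt_19_general c r i p hp hmin
end
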